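/- arXiv:math/9404234 — 2 statements merged into one kernel-verified Lean document; each statement's English description precedes it below -/
import Mathlib

section
/- Let K be a compact metric space, f : K → ℝ a function, and α a countable ordinal. Then v_α(f) ≤ osc_α(f) ≤ v_α(f) + v_α(-f) pointwise on K. -/
open Filter Topology

section DKdefs
variable {K : Type*} [MetricSpace K] [CompactSpace K]

/-- A bounded lower semicontinuous real function. -/
def BddLSC (u : K → ℝ) : Prop := LowerSemicontinuous u ∧ ∃ M : ℝ, ∀ x, |u x| ≤ M

/-- `f ∈ D(K)`: `f = (u₁ - u₂) + i(u₃ - u₄)` with the `uᵢ` bounded lower semicontinuous. -/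
def MemDK (f : K → ℂ) : Prop :=
  ∃ u₁ u₂ u₃ u₄ : K → ℝ, BddLSC u₁ ∧ BddLSC u₂ ∧ BddLSC u₃ ∧ BddLSC u₄ ∧
    ∀ x, f x = ((u₁ x - u₂ x : ℝ) : ℂ) + Complex.I * ((u₃ x - u₄ x : ℝ) : ℂ)

/-- `f ∈ D(K)` for real `f`: a difference of bounded lower semicontinuous functions. -/
def MemDKReal (f : K → ℝ) : Prop :=
  ∃ u₁ u₂ : K → ℝ, BddLSC u₁ ∧ BddLSC u₂ ∧ ∀ x, f x = u₁ x - u₂ x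

/-- Upper semicontinuous envelope `Ug(x) = limsup_{y → x} g(y)` (non-exclusive limsup). -/
noncomputable def uscEnv (g : K → EReal) : K → EReal := fun x => limsup g (𝓝 x)

/-- The transfinite oscillations `osc_β f` of a complex-valued function. -/
noncomputable def oscOrd (f : K → ℂ) (β : Ordinal) : K → EReal :=
  Ordinal.limitRecOn β (fun _ => (0 : EReal))
    (fun _ ih => uscEnv fun x =>
      limsup (fun y => ((‖f y - f x‖ : ℝ) : EReal) + ih y) (𝓝 x))
    (fun β _ ih => uscEnv fun x => ⨆ (α : Ordinal) (h : α < β), ih α h x)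

/-- The transfinite oscillations `osc_β f` of a real-valued function. -/
noncomputable def oscOrdR (f : K → ℝ) (β : Ordinal) : K → EReal :=
  Ordinal.limitRecOn β (fun _ => (0 : EReal))
    (fun _ ih => uscEnv fun x =>
      limsup (fun y => ((|f y - f x| : ℝ) : EReal) + ih y) (𝓝 x))
    (fun β _ ih => uscEnv fun x => ⨆ (α : Ordinal) (h : α < β), ih α h x)

/-- The positive transfinite oscillations `v_β f` of a real-valued function
(as `osc_β`, but with `f y - f x` in place of `|f y - f x|`). -/
noncomputable def vOrd (f : K → ℝ) (β : Ordinal) : K → EReal :=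
  Ordinal.limitRecOn β (fun _ => (0 : EReal))
    (fun _ ih => uscEnv fun x =>
      limsup (fun y => ((f y - f x : ℝ) : EReal) + ih y) (𝓝 x))
    (fun β _ ih => uscEnv fun x => ⨆ (α : Ordinal) (h : α < β), ih α h x)

/-- The `D(K)`-norm of a real function: the infimum of `sup_{x} Σ_j |φ_j x|` over all
pointwise representations `f = Σ_j φ_j` with `φ_j` continuous. -/
noncomputable def DNorm (f : K → ℝ) : ℝ :=
  sInf {M : ℝ | ∃ φ : ℕ → K → ℝ, (∀ j, Continuous (φ j)) ∧
    (∀ x, HasSum (fun j => φ j x) (f x)) ∧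
    (∀ x, Summable fun j => |φ j x|) ∧ ∀ x, (∑' j, |φ j x|) ≤ M}

end DKdefs

/-!
Both inequalities go by transfinite induction on `α`, for the oscillations built from an
arbitrary increment kernel `d y x` in place of `f y - f x`. The first one is monotonicity in
the kernel, since `f y - f x ≤ |f y - f x|`. For the second, `|f y - f x|` is the larger of the
increments of `f` and `-f`. At a successor step, near `x`, the term `|f y - f x| + osc_α f y` is
bounded by the larger increment plus its own `v_α`, plus `v_{α+1}` of the other function; as
every `v_{α+1}` is upper semicontinuous and the upper semicontinuous envelope is subadditive on
functions that are not `⊥`, this gives `osc_{α+1} f ≤ v_{α+1} f + v_{α+1} (-f)`. Limit steps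
only need that subadditivity.
-/

lemma EReal.ne_bot_of_nonneg {a : EReal} (h : 0 ≤ a) : a ≠ ⊥ :=
  ne_bot_of_le_ne_bot EReal.zero_ne_bot h

section LimsupNhds
variable {X : Type*} [TopologicalSpace X]

lemma le_limsup_nhds {β : Type*} [CompleteLattice β] (g : X → β) (x : X) :
    g x ≤ limsup g (𝓝 x) := by
  rw [limsup_eq_iInf_iSup]
  exact le_iInf₂ fun s hs => le_iSup₂_of_le x (mem_of_mem_nhds hs) le_rfl

lemma limsup_nhds_add_le {g h : X → EReal} {x : X} (hg : g x ≠ ⊥) (hh : h x ≠ ⊥) :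
    limsup (fun y => g y + h y) (𝓝 x) ≤ limsup g (𝓝 x) + limsup h (𝓝 x) :=
  EReal.limsup_add_le (.inl (ne_bot_of_le_ne_bot hg (le_limsup_nhds g x)))
    (.inr (ne_bot_of_le_ne_bot hh (le_limsup_nhds h x)))

end LimsupNhds

section TransOsc
variable {K : Type*} [MetricSpace K]

lemma le_uscEnv (g : K → EReal) (x : K) : g x ≤ uscEnv g x := le_limsup_nhds g x

lemma uscEnv_mono {g h : K → EReal} (hgh : g ≤ h) : uscEnv g ≤ uscEnv h :=
  fun _ => limsup_le_limsup (Eventually.of_forall hgh)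

lemma limsup_uscEnv_le (g : K → EReal) (x : K) : limsup (uscEnv g) (𝓝 x) ≤ uscEnv g x := by
  rw [uscEnv, limsup_eq_iInf_iSup (u := g)]
  refine le_iInf₂ fun s hs => limsup_le_of_le (by isBoundedDefault) ?_
  filter_upwards [interior_mem_nhds.2 hs] with y hy
  rw [uscEnv, limsup_eq_iInf_iSup]
  exact iInf₂_le s (mem_interior_iff_mem_nhds.1 hy)

lemma uscEnv_add_le {g h : K → EReal} {x : K} (hg : g x ≠ ⊥) (hh : h x ≠ ⊥) :
    uscEnv (fun y => g y + h y) x ≤ uscEnv g x + uscEnv h x :=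
  limsup_nhds_add_le hg hh

noncomputable def transOsc (d : K → K → ℝ) (β : Ordinal) : K → EReal :=
  Ordinal.limitRecOn β (fun _ => (0 : EReal))
    (fun _ ih => uscEnv fun x => limsup (fun y => (d y x : EReal) + ih y) (𝓝 x))
    (fun β _ ih => uscEnv fun x => ⨆ (α : Ordinal) (hα : α < β), ih α hα x)

lemma vOrd_eq_transOsc (f : K → ℝ) : vOrd f = transOsc fun y x => f y - f x := rfl

lemma oscOrdR_eq_transOsc (f : K → ℝ) : oscOrdR f = transOsc fun y x => |f y - f x| := rfl

variable (d : K → K → ℝ)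

lemma transOsc_zero : transOsc d 0 = 0 := by
  rw [transOsc, Ordinal.limitRecOn_zero]; rfl

lemma transOsc_add_one (α : Ordinal) : transOsc d (α + 1) =
    uscEnv fun x => limsup (fun y => (d y x : EReal) + transOsc d α y) (𝓝 x) := by
  rw [transOsc, Ordinal.limitRecOn_add_one]; rfl

lemma transOsc_limit {β : Ordinal} (hβ : Order.IsSuccLimit β) :
    transOsc d β = uscEnv fun x => ⨆ (α : Ordinal) (_ : α < β), transOsc d α x := by
  rw [transOsc, Ordinal.limitRecOn_limit _ _ _ _ hβ]; rfl

lemma limsup_le_transOsc_add_one (α : Ordinal) (x : K) :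
    limsup (fun y => (d y x : EReal) + transOsc d α y) (𝓝 x) ≤ transOsc d (α + 1) x := by
  rw [transOsc_add_one]
  exact le_uscEnv (fun z => limsup (fun y => (d y z : EReal) + transOsc d α y) (𝓝 z)) x

lemma limsup_transOsc_le (β : Ordinal) (x : K) :
    limsup (transOsc d β) (𝓝 x) ≤ transOsc d β x := by
  rcases Ordinal.zero_or_succ_or_isSuccLimit β with rfl | ⟨α, rfl⟩ | hβ
  · simp [transOsc_zero, Pi.zero_def]
  · rw [Order.succ_eq_add_one, transOsc_add_one]; exact limsup_uscEnv_le _ x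
  · rw [transOsc_limit d hβ]; exact limsup_uscEnv_le _ x

variable {d}

lemma transOsc_le_transOsc_add_one (hd : ∀ x, 0 ≤ d x x) (α : Ordinal) (x : K) :
    transOsc d α x ≤ transOsc d (α + 1) x :=
  calc transOsc d α x ≤ (d x x : EReal) + transOsc d α x :=
        le_add_of_nonneg_left (EReal.coe_nonneg.2 (hd x))
    _ ≤ _ := le_limsup_nhds (fun y => (d y x : EReal) + transOsc d α y) x
    _ ≤ _ := limsup_le_transOsc_add_one d α x

lemma transOsc_nonneg (hd : ∀ x, 0 ≤ d x x) (β : Ordinal) : 0 ≤ transOsc d β := by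
  induction β using Ordinal.limitRecOn with
  | zero => rw [transOsc_zero]
  | add_one α ih => exact ih.trans (transOsc_le_transOsc_add_one hd α)
  | limit β hβ ih =>
    rw [transOsc_limit d hβ]
    intro x
    calc (0 : EReal) ≤ ⨆ (α : Ordinal) (_ : α < β), transOsc d α x :=
          le_iSup₂_of_le 0 hβ.bot_lt (ih 0 hβ.bot_lt x)
      _ ≤ _ := le_uscEnv (fun z => ⨆ (α : Ordinal) (_ : α < β), transOsc d α z) x

lemma transOsc_mono {d' : K → K → ℝ} (hdd' : ∀ y x, d y x ≤ d' y x) (β : Ordinal) :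
    transOsc d β ≤ transOsc d' β := by
  induction β using Ordinal.limitRecOn with
  | zero => rw [transOsc_zero, transOsc_zero]
  | add_one α ih =>
    rw [transOsc_add_one, transOsc_add_one]
    exact uscEnv_mono fun x => limsup_le_limsup <| Eventually.of_forall fun y =>
      add_le_add (EReal.coe_le_coe_iff.2 (hdd' y x)) (ih y)
  | limit β hβ ih =>
    rw [transOsc_limit d hβ, transOsc_limit d' hβ]
    exact uscEnv_mono fun x => iSup₂_mono fun α hα => ih α hα x

lemma limsup_add_le_transOsc_add_one_add {d' : K → K → ℝ} (hd : ∀ x, 0 ≤ d x x)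
    (hd' : ∀ x, 0 ≤ d' x x) (α β : Ordinal) (x : K) :
    limsup (fun y => (d y x : EReal) + transOsc d α y + transOsc d' β y) (𝓝 x) ≤
      transOsc d (α + 1) x + transOsc d' β x :=
  calc _ ≤ limsup (fun y => (d y x : EReal) + transOsc d α y) (𝓝 x) +
        limsup (transOsc d' β) (𝓝 x) :=
        limsup_nhds_add_le
          (EReal.ne_bot_of_nonneg
            (add_nonneg (EReal.coe_nonneg.2 (hd x)) (transOsc_nonneg hd α x)))
          (EReal.ne_bot_of_nonneg (transOsc_nonneg hd' β x))
    _ ≤ _ := add_le_add (limsup_le_transOsc_add_one d α x) (limsup_transOsc_le d' β x)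

variable {d₁ d₂ : K → K → ℝ}

lemma transOsc_max_add_one_le_add (hd₁ : ∀ x, 0 ≤ d₁ x x) (hd₂ : ∀ x, 0 ≤ d₂ x x)
    {α : Ordinal} (ih : ∀ y, transOsc (fun y x => max (d₁ y x) (d₂ y x)) α y ≤
      transOsc d₁ α y + transOsc d₂ α y) (x : K) :
    transOsc (fun y x => max (d₁ y x) (d₂ y x)) (α + 1) x ≤
      transOsc d₁ (α + 1) x + transOsc d₂ (α + 1) x := by
  set D : K → K → ℝ := fun y x => max (d₁ y x) (d₂ y x)
  -- keep the `α`-oscillation of the larger kernel and raise the other one to level `α + 1`,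
  -- whose limsup is controlled by upper semicontinuity
  have split : ∀ y z, (D y z : EReal) + transOsc D α y ≤
      max ((d₁ y z : EReal) + transOsc d₁ α y + transOsc d₂ (α + 1) y)
        ((d₂ y z : EReal) + transOsc d₂ α y + transOsc d₁ (α + 1) y) := by
    intro y z
    have h₁ : transOsc d₁ α y + transOsc d₂ α y ≤ transOsc d₁ α y + transOsc d₂ (α + 1) y :=
      add_le_add le_rfl (transOsc_le_transOsc_add_one hd₂ α y)
    have h₂ : transOsc d₁ α y + transOsc d₂ α y ≤ transOsc d₂ α y + transOsc d₁ (α + 1) y :=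
      (add_comm _ _).trans_le (add_le_add le_rfl (transOsc_le_transOsc_add_one hd₁ α y))
    rcases le_total (d₁ y z) (d₂ y z) with h | h
    · refine le_max_of_le_right ?_
      rw [show D y z = d₂ y z from max_eq_right h, add_assoc]
      exact add_le_add le_rfl ((ih y).trans h₂)
    · refine le_max_of_le_left ?_
      rw [show D y z = d₁ y z from max_eq_left h, add_assoc]
      exact add_le_add le_rfl ((ih y).trans h₁)
  have pre : ∀ z, limsup (fun y => (D y z : EReal) + transOsc D α y) (𝓝 z) ≤
      transOsc d₁ (α + 1) z + transOsc d₂ (α + 1) z := fun z =>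
    calc _ ≤ _ := limsup_le_limsup (Eventually.of_forall fun y => split y z)
      _ = _ := limsup_max
      _ ≤ _ := max_le (limsup_add_le_transOsc_add_one_add hd₁ hd₂ α (α + 1) z)
        ((limsup_add_le_transOsc_add_one_add hd₂ hd₁ α (α + 1) z).trans_eq (add_comm _ _))
  rw [transOsc_add_one D]
  calc _ ≤ uscEnv (fun z => transOsc d₁ (α + 1) z + transOsc d₂ (α + 1) z) x :=
        uscEnv_mono pre x
    _ ≤ uscEnv (transOsc d₁ (α + 1)) x + uscEnv (transOsc d₂ (α + 1)) x :=
        uscEnv_add_le (EReal.ne_bot_of_nonneg (transOsc_nonneg hd₁ _ x))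
          (EReal.ne_bot_of_nonneg (transOsc_nonneg hd₂ _ x))
    _ ≤ _ := add_le_add (limsup_transOsc_le d₁ _ x) (limsup_transOsc_le d₂ _ x)

theorem transOsc_max_le_add (hd₁ : ∀ x, 0 ≤ d₁ x x) (hd₂ : ∀ x, 0 ≤ d₂ x x) (β : Ordinal)
    (x : K) :
    transOsc (fun y x => max (d₁ y x) (d₂ y x)) β x ≤ transOsc d₁ β x + transOsc d₂ β x := by
  induction β using Ordinal.limitRecOn generalizing x with
  | zero => simp [transOsc_zero]
  | add_one α ih => exact transOsc_max_add_one_le_add hd₁ hd₂ ih x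
  | limit β hβ ih =>
    have sup_ne_bot : ∀ {d : K → K → ℝ}, (∀ x, 0 ≤ d x x) →
        (⨆ (α : Ordinal) (_ : α < β), transOsc d α x) ≠ ⊥ := fun hd =>
      EReal.ne_bot_of_nonneg (le_iSup₂_of_le 0 hβ.bot_lt (transOsc_nonneg hd 0 x))
    rw [transOsc_limit _ hβ, transOsc_limit d₁ hβ, transOsc_limit d₂ hβ]
    calc _ ≤ uscEnv (fun z => (⨆ (α : Ordinal) (_ : α < β), transOsc d₁ α z) +
          ⨆ (α : Ordinal) (_ : α < β), transOsc d₂ α z) x :=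
          uscEnv_mono (fun z => iSup₂_le fun α hα =>
            (ih α hα z).trans (add_le_add (le_iSup₂_of_le α hα le_rfl)
              (le_iSup₂_of_le α hα le_rfl))) x
      _ ≤ _ := uscEnv_add_le (sup_ne_bot hd₁) (sup_ne_bot hd₂)

end TransOsc

theorem vOrd_le_oscOrd_le_add_general {K : Type*} [MetricSpace K]
    (f : K → ℝ) (α : Ordinal) (x : K) :
    vOrd f α x ≤ oscOrdR f α x ∧
    oscOrdR f α x ≤ vOrd f α x + vOrd (fun y => -f y) α x := by
  have diag : ∀ g : K → ℝ, ∀ x, 0 ≤ g x - g x := fun g x => (sub_self (g x)).ge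
  have abs_eq : (fun y x => |f y - f x|) = fun y x => max (f y - f x) (-f y - -f x) := by
    ext y x
    rw [abs_eq_max_neg, neg_sub, sub_neg_eq_add, neg_add_eq_sub]
  rw [oscOrdR_eq_transOsc, vOrd_eq_transOsc, vOrd_eq_transOsc]
  refine ⟨transOsc_mono (fun y x => le_abs_self _) α x, ?_⟩
  rw [abs_eq]
  exact transOsc_max_le_add (diag f) (diag _) α x

/-- For real `f` and countable `α`: `v_α f ≤ osc_α f ≤ v_α f + v_α (-f)` pointwise. -/
theorem vOrd_le_oscOrd_le_add {K : Type*} [MetricSpace K] [CompactSpace K]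
    (f : K → ℝ) (α : Ordinal) (hα : α < (Cardinal.aleph 1).ord) (x : K) :
    vOrd f α x ≤ oscOrdR f α x ∧
    oscOrdR f α x ≤ vOrd f α x + vOrd (fun y => -f y) α x :=
  vOrd_le_oscOrd_le_add_general f α x
end

section
/- Let K be a compact metric space and f : K → ℝ a bounded function. Then f is a difference of bounded semicontinuous functions (f ∈ D(K)) if and only if the positive transfinite oscillation v_α f is a bounded function for every countable ordinal α; moreover, when this holds there exists a countable ordinal α with v_α f = v_{α+1} f. -/
open Filter Topology

/-! For bounded `f`, membership in `D(K)` is equivalent to the existence of a bounded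
`G ≥ 0` with `G` and `f + G` upper semicontinuous: take `G = M - u₁` when `f = u₁ - u₂`, and
conversely `f = (-G) - (-(f + G))`. Upper semicontinuity of `f + G` at `x` says exactly
`limsup_{y → x} (f y - f x + G y) ≤ G x`, so such a `G` dominates every `v_α f` by transfinite
induction. In the other direction, the `v_α f` form an increasing family of upper semicontinuous
functions, which on a second countable space stabilises before `ω₁`; a bounded fixed point
`v_α f = v_{α+1} f` is then such a `G`. -/

lemma le_limsup_nhds_self {X γ : Type*} [TopologicalSpace X] [CompleteLattice γ] (g : X → γ)
    (x : X) : g x ≤ limsup g (𝓝 x) :=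
  le_limsup_of_frequently_le' <|
    (frequently_pure (p := fun y => g x ≤ g y)).2 le_rfl |>.filter_mono (pure_le_nhds x)

lemma upperSemicontinuous_coe_ereal_iff {X : Type*} [TopologicalSpace X] {G : X → ℝ} :
    UpperSemicontinuous (fun x => (G x : EReal)) ↔ UpperSemicontinuous G :=
  ⟨fun h x t ht => (h x t (EReal.coe_lt_coe_iff.2 ht)).mono fun _ => EReal.coe_lt_coe_iff.1,
    fun h => continuous_coe_real_ereal.comp_upperSemicontinuous h EReal.coe_strictMono.monotone⟩

section uscEnv

variable {K : Type*} [MetricSpace K]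

lemma upperSemicontinuous_uscEnv (g : K → EReal) : UpperSemicontinuous (uscEnv g) := by
  intro x c hc
  obtain ⟨b, hxb, hbc⟩ := exists_between hc
  filter_upwards [eventually_eventually_nhds.2 (eventually_lt_of_limsup_lt hxb)] with z hz
  exact (limsup_le_of_le (h := hz.mono fun _ => le_of_lt)).trans_lt hbc

lemma uscEnv_le_of_le {g G : K → EReal} (hG : UpperSemicontinuous G) (hgG : g ≤ G) :
    uscEnv g ≤ G := fun x =>
  (limsup_le_limsup (Eventually.of_forall hgG)).trans (hG.limsup_le x)

end uscEnv

section vOrd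

variable {K : Type*} [MetricSpace K] (f : K → ℝ)

lemma vOrd_zero : vOrd f 0 = 0 := Ordinal.limitRecOn_zero ..

lemma vOrd_add_one (α : Ordinal) :
    vOrd f (α + 1) =
      uscEnv fun x => limsup (fun y => ((f y - f x : ℝ) : EReal) + vOrd f α y) (𝓝 x) :=
  Ordinal.limitRecOn_add_one ..

lemma vOrd_of_isSuccLimit {β : Ordinal} (hβ : Order.IsSuccLimit β) :
    vOrd f β = uscEnv fun x => ⨆ (α : Ordinal) (_ : α < β), vOrd f α x :=
  Ordinal.limitRecOn_limit _ _ _ _ hβ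

lemma upperSemicontinuous_vOrd (α : Ordinal) : UpperSemicontinuous (vOrd f α) := by
  rcases Ordinal.zero_or_succ_or_isSuccLimit α with rfl | ⟨γ, rfl⟩ | hα
  · rw [vOrd_zero]
    exact upperSemicontinuous_const
  · rw [Order.succ_eq_add_one, vOrd_add_one]
    exact upperSemicontinuous_uscEnv _
  · rw [vOrd_of_isSuccLimit f hα]
    exact upperSemicontinuous_uscEnv _

lemma vOrd_le_vOrd_add_one (α : Ordinal) : vOrd f α ≤ vOrd f (α + 1) := fun x => by
  rw [vOrd_add_one]
  refine le_trans ?_ (le_uscEnv _ x)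
  simpa using le_limsup_nhds_self (fun y => ((f y - f x : ℝ) : EReal) + vOrd f α y) x

lemma monotone_vOrd : Monotone (vOrd f) := by
  intro α β hαβ
  induction β using WellFoundedLT.induction with
  | _ β ih =>
    rcases hαβ.eq_or_lt with rfl | hlt
    · exact le_rfl
    rcases Ordinal.zero_or_succ_or_isSuccLimit β with rfl | ⟨γ, rfl⟩ | hβ
    · exact absurd hlt (zero_le (a := α)).not_gt
    · rw [Order.succ_eq_add_one] at hlt ⊢
      exact (ih γ (Order.lt_add_one_iff.2 le_rfl) (Order.lt_add_one_iff.1 hlt)).trans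
        (vOrd_le_vOrd_add_one f γ)
    · rw [vOrd_of_isSuccLimit f hβ]
      refine fun x => le_trans ?_ (le_uscEnv _ x)
      exact le_iSup₂ (f := fun γ (_ : γ < β) => vOrd f γ x) α hlt

lemma vOrd_nonneg (α : Ordinal) : 0 ≤ vOrd f α :=
  vOrd_zero f ▸ monotone_vOrd f (zero_le (a := α))

end vOrd

section Majorant

variable {K : Type*} [MetricSpace K] {f G : K → ℝ}

lemma upperSemicontinuous_add_iff_limsup_le :
    UpperSemicontinuous (f + G) ↔
      ∀ x, limsup (fun y => ((f y - f x : ℝ) : EReal) + G y) (𝓝 x) ≤ G x := by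
  have shift : ∀ x y, ((f y - f x : ℝ) : EReal) + G y = (((f + G) y - f x : ℝ) : EReal) :=
    fun x y => by rw [← EReal.coe_add, Pi.add_apply]; ring_nf
  simp only [shift]
  refine ⟨fun h x => ?_, fun h x t ht => ?_⟩
  · have hshift : Monotone fun t : ℝ => ((t - f x : ℝ) : EReal) :=
      fun a b hab => EReal.coe_le_coe_iff.2 (by linarith)
    have hcont : Continuous fun t : ℝ => ((t - f x : ℝ) : EReal) :=
      continuous_coe_real_ereal.comp (continuous_sub_right (f x))
    refine (hcont.continuousAt.comp_upperSemicontinuousAt (h x) hshift).limsup_le.trans_eq ?_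
    show ((f x + G x - f x : ℝ) : EReal) = G x
    rw [add_sub_cancel_left]
  · have hlt :
        limsup (fun y => (((f + G) y - f x : ℝ) : EReal)) (𝓝 x) < ((t - f x : ℝ) : EReal) :=
      (h x).trans_lt (EReal.coe_lt_coe_iff.2 (by simp only [Pi.add_apply] at ht; linarith))
    filter_upwards [eventually_lt_of_limsup_lt hlt] with y hy
    linarith [EReal.coe_lt_coe_iff.1 hy]

lemma vOrd_le_of_upperSemicontinuous (hG0 : 0 ≤ G) (hG : UpperSemicontinuous G)
    (hfG : UpperSemicontinuous (f + G)) (α : Ordinal) : vOrd f α ≤ fun x => (G x : EReal) := by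
  have hG' := upperSemicontinuous_coe_ereal_iff.2 hG
  induction α using Ordinal.limitRecOn with
  | zero => exact fun x => (congrFun (vOrd_zero f) x).trans_le (EReal.coe_nonneg.2 (hG0 x))
  | add_one α ih =>
    rw [vOrd_add_one]
    refine uscEnv_le_of_le hG' fun x => ?_
    calc limsup (fun y => ((f y - f x : ℝ) : EReal) + vOrd f α y) (𝓝 x)
        ≤ limsup (fun y => ((f y - f x : ℝ) : EReal) + G y) (𝓝 x) :=
          limsup_le_limsup (Eventually.of_forall fun y => add_le_add_right (ih y) _)
      _ ≤ G x := upperSemicontinuous_add_iff_limsup_le.1 hfG x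
  | limit β hβ ih =>
    rw [vOrd_of_isSuccLimit f hβ]
    exact uscEnv_le_of_le hG' fun x => iSup₂_le fun α hα => ih α hα x

theorem memDKReal_iff_exists_upperSemicontinuous (hf : ∃ M, ∀ x, |f x| ≤ M) :
    MemDKReal f ↔ ∃ G : K → ℝ, 0 ≤ G ∧ BddAbove (Set.range G) ∧
      UpperSemicontinuous G ∧ UpperSemicontinuous (f + G) := by
  constructor
  · rintro ⟨u₁, u₂, ⟨hu₁, M, hM⟩, ⟨hu₂, -⟩, hrep⟩
    obtain rfl : f = u₁ - u₂ := funext hrep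
    have hanti : Antitone fun t : ℝ => M - t := fun a b hab => by linarith
    refine ⟨fun x => M - u₁ x, fun x => sub_nonneg.2 (le_of_abs_le (hM x)), ⟨2 * M, ?_⟩,
      (continuous_sub_left M).comp_lowerSemicontinuous_antitone hu₁ hanti, ?_⟩
    · rintro _ ⟨x, rfl⟩
      linarith [(abs_le.1 (hM x)).1]
    · have hsum : u₁ - u₂ + (fun x => M - u₁ x) = (fun t => M - t) ∘ u₂ := by
        ext x
        simp only [Pi.add_apply, Pi.sub_apply, Function.comp_apply]
        ring
      rw [hsum]
      exact (continuous_sub_left M).comp_lowerSemicontinuous_antitone hu₂ hanti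
  · rintro ⟨G, hG0, ⟨M, hM⟩, hG, hfG⟩
    obtain ⟨Mf, hMf⟩ := hf
    have hneg : Antitone fun t : ℝ => -t := fun _ _ => neg_le_neg
    refine ⟨-G, -(f + G),
      ⟨continuous_neg.comp_upperSemicontinuous_antitone hG hneg, M, fun x => ?_⟩,
      ⟨continuous_neg.comp_upperSemicontinuous_antitone hfG hneg, Mf + M, fun x => ?_⟩,
      fun x => by simp⟩
    · have := hM ⟨x, rfl⟩
      rw [Pi.neg_apply, abs_neg, abs_of_nonneg (hG0 x)]
      exact this
    · have := hM ⟨x, rfl⟩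
      rw [Pi.neg_apply, abs_neg, Pi.add_apply]
      exact (abs_add_le _ _).trans (add_le_add (hMf x) (by rwa [abs_of_nonneg (hG0 x)]))

lemma exists_upperSemicontinuous_of_vOrd_eq_add_one {α : Ordinal} {M : ℝ}
    (hfix : vOrd f α = vOrd f (α + 1)) (hM : ∀ x, vOrd f α x ≤ M) :
    ∃ G : K → ℝ, 0 ≤ G ∧ BddAbove (Set.range G) ∧
      UpperSemicontinuous G ∧ UpperSemicontinuous (f + G) := by
  set G : K → ℝ := fun x => (vOrd f α x).toReal
  have hG : ∀ x, (G x : EReal) = vOrd f α x := fun x =>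
    EReal.coe_toReal (ne_top_of_le_ne_top (EReal.coe_ne_top M) (hM x))
      (ne_bot_of_le_ne_bot EReal.zero_ne_bot (vOrd_nonneg f α x))
  refine ⟨G, fun x => EReal.toReal_nonneg (vOrd_nonneg f α x), ⟨M, ?_⟩,
    upperSemicontinuous_coe_ereal_iff.1 ?_, upperSemicontinuous_add_iff_limsup_le.2 fun x => ?_⟩
  · rintro _ ⟨x, rfl⟩
    exact EReal.coe_le_coe_iff.1 ((hG x).trans_le (hM x))
  · simpa only [hG] using upperSemicontinuous_vOrd f α
  · simp only [hG]
    calc limsup (fun y => ((f y - f x : ℝ) : EReal) + vOrd f α y) (𝓝 x)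
        ≤ vOrd f (α + 1) x := by
          rw [vOrd_add_one]
          exact le_uscEnv
            (fun z => limsup (fun y => ((f y - f z : ℝ) : EReal) + vOrd f α y) (𝓝 z)) x
      _ = vOrd f α x := by rw [hfix]

end Majorant

open TopologicalSpace in
theorem exists_lt_ord_aleph_one_eq_add_one {X : Type*} [TopologicalSpace X]
    [SecondCountableTopology X] {F : Ordinal → X → EReal} (hF : Monotone F)
    (hF_usc : ∀ α, UpperSemicontinuous (F α)) :
    ∃ α < (Cardinal.aleph 1).ord, F α = F (α + 1) := by
  rw [Cardinal.ord_aleph]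
  by_contra! hne
  -- `β (B, q)` is the first stage at which `F · < q` fails somewhere on the basic open set `B`;
  -- past `γ = ⨆ β`, no such first failure is left to produce a strict increase.
  let fails (p : countableBasis X × ℚ) (α : Ordinal) : Prop :=
    α < Ordinal.omega 1 ∧ ∃ z ∈ (p.1 : Set X), ((p.2 : ℝ) : EReal) ≤ F α z
  let β (p : countableBasis X × ℚ) : Ordinal := sInf {α | fails p α}
  have hβ : ∀ p, β p < Ordinal.omega 1 := fun p => by
    rcases Set.eq_empty_or_nonempty {α | fails p α} with h | h
    · simp only [β, h, Ordinal.sInf_empty]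
      exact Ordinal.omega_pos 1
    · exact (csInf_mem h).1
  set γ := ⨆ p, β p
  have hγ : γ < Ordinal.omega 1 := Ordinal.iSup_lt_omega_one hβ
  obtain ⟨x, hx⟩ : ∃ x, F γ x < F (γ + 1) x :=
    Pi.lt_def.1 ((hF (Order.le_succ γ)).lt_of_ne (hne γ hγ)) |>.2
  obtain ⟨q, hxq, hqx⟩ := EReal.exists_rat_btwn_of_lt hx
  obtain ⟨B, hB, hxB, hBq⟩ := (isBasis_countableBasis X).exists_subset_of_mem_open hxq
    ((hF_usc γ).isOpen_preimage _)
  let p : countableBasis X × ℚ := (⟨B, hB⟩, q)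
  have hγ_succ : γ + 1 < Ordinal.omega 1 :=
    (Cardinal.isSuccLimit_omega 1).add_one_lt hγ
  have hfails : {α | fails p α}.Nonempty := ⟨γ + 1, hγ_succ, x, hxB, hqx.le⟩
  obtain ⟨-, z, hzB, hz⟩ : fails p (β p) := csInf_mem hfails
  have hβγ : β p ≤ γ := Ordinal.le_iSup β p
  exact (hz.trans (hF hβγ z)).not_gt (hBq hzB)

lemma exists_vOrd_eq_vOrd_add_one {K : Type*} [MetricSpace K] [SecondCountableTopology K]
    (f : K → ℝ) : ∃ α < (Cardinal.aleph 1).ord, vOrd f α = vOrd f (α + 1) :=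
  exists_lt_ord_aleph_one_eq_add_one (monotone_vOrd f) (upperSemicontinuous_vOrd f)

/-- A bounded real `f` is a difference of bounded semicontinuous functions iff the
positive transfinite oscillation `v_α f` is a bounded function for every countable
ordinal `α`; moreover in that case `v_α f = v_{α+1} f` for some countable `α`. -/
theorem memDKReal_iff_vOrd_bounded {K : Type*} [MetricSpace K] [CompactSpace K]
    (f : K → ℝ) (hf : ∃ M : ℝ, ∀ x, |f x| ≤ M) :
    (MemDKReal f ↔
      ∀ α : Ordinal, α < (Cardinal.aleph 1).ord →
        ∃ M : ℝ, ∀ x, vOrd f α x ≤ (M : EReal)) ∧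
    (MemDKReal f →
      ∃ α : Ordinal, α < (Cardinal.aleph 1).ord ∧ vOrd f α = vOrd f (α + 1)) := by
  refine ⟨⟨fun hmem α _ => ?_, fun hbdd => ?_⟩, fun _ => exists_vOrd_eq_vOrd_add_one f⟩
  · obtain ⟨G, hG0, ⟨M, hM⟩, hG, hfG⟩ :=
      (memDKReal_iff_exists_upperSemicontinuous hf).1 hmem
    exact ⟨M, fun x => (vOrd_le_of_upperSemicontinuous hG0 hG hfG α x).trans
      (EReal.coe_le_coe_iff.2 (hM ⟨x, rfl⟩))⟩
  · obtain ⟨α, hα, hfix⟩ := exists_vOrd_eq_vOrd_add_one f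
    obtain ⟨M, hM⟩ := hbdd α hα
    exact (memDKReal_iff_exists_upperSemicontinuous hf).2
      (exists_upperSemicontinuous_of_vOrd_eq_add_one hfix hM)
end
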